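/- Let π be any policy of a finite MDP, F differentiable and concave on M, and let ε > 0. Then ⟨∇F(μ_π), μ' − μ_π⟩ ≤ ε for all μ' ∈ M if and only if the exploitability φ(π) = max_{π'} J(π', μ_π) − J(π, μ_π) is at most ε, where J(π', μ) = ⟨μ_{π'}, ∇F(μ)⟩. -/

import Mathlib

/-!
The inner product `⟪∇F(μ_π), μ' - μ_π⟫` equals `J(μ') - J(μ_π)` for the linear functional
`J = ⟪·, ∇F(μ_π)⟫`, so the two conditions agree once the flow polytope `M` is known to be exactly
the set of occupancy measures of policies. Occupancy measures satisfy the Bellman flow equations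
by shifting the discounted series one step. Conversely, for `μ ∈ M` the conditional policy
`π'(a | s) = μ(s, a) / ∑ b, μ(s, b)` has occupancy measure `μ`: both measures factor as
`π'(a | s) ν(s)`, and the two state marginals `ν` solve `ν = (1 - γ) ρ₀ + γ Kᵀ ν` for the
stochastic matrix `K` of `π'`, whose solution is unique because `γ Kᵀ` contracts the `ℓ¹` norm.
-/

noncomputable section
open scoped BigOperators

def IsDist {X : Type*} [Fintype X] (p : X → ℝ) : Prop :=
  (∀ x, 0 ≤ p x) ∧ ∑ x, p x = 1

def IsPolicy {S A : Type*} [Fintype A] (π : S → A → ℝ) : Prop :=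
  ∀ s, IsDist (π s)

def IsKernel {S A : Type*} [Fintype S] (P : S → A → S → ℝ) : Prop :=
  ∀ s a, IsDist (P s a)

/-- Probability of (S_t = s, A_t = a) under policy `π`, kernel `P`, initial law `ρ0`. -/
def saDist {S A : Type*} [Fintype S] [Fintype A] (P : S → A → S → ℝ) (π : S → A → ℝ)
    (ρ0 : S → ℝ) : ℕ → S → A → ℝ
  | 0 => fun s a => ρ0 s * π s a
  | (t + 1) => fun s a => π s a * ∑ s' : S, ∑ a' : A, P s' a' s * saDist P π ρ0 t s' a'

/-- Discounted state-action occupancy measure of policy `π`. -/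
def occ {S A : Type*} [Fintype S] [Fintype A] (γ : ℝ) (P : S → A → S → ℝ)
    (π : S → A → ℝ) (ρ0 : S → ℝ) (s : S) (a : A) : ℝ :=
  (1 - γ) * ∑' t : ℕ, γ ^ t * saDist P π ρ0 t s a

/-- The Bellman flow constraint set `M`. -/
def InFlow {S A : Type*} [Fintype S] [Fintype A] (γ : ℝ) (P : S → A → S → ℝ)
    (ρ0 : S → ℝ) (μ : S → A → ℝ) : Prop :=
  IsDist (fun p : S × A => μ p.1 p.2) ∧
  ∀ s, ∑ a, μ s a = (1 - γ) * ρ0 s + γ * ∑ s' : S, ∑ a' : A, P s' a' s * μ s' a'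

open scoped RealInnerProductSpace

/-- The occupancy measure of `π` viewed as a point of Euclidean space `ℝ^{S×A}`. -/
def occE {S A : Type*} [Fintype S] [Fintype A] (γ : ℝ) (P : S → A → S → ℝ)
    (π : S → A → ℝ) (ρ0 : S → ℝ) : EuclideanSpace ℝ (S × A) :=
  WithLp.toLp 2 (fun p : S × A => occ γ P π ρ0 p.1 p.2)

/-- The Bellman flow polytope `M` inside Euclidean space `ℝ^{S×A}`. -/
def MflowE {S A : Type*} [Fintype S] [Fintype A] (γ : ℝ) (P : S → A → S → ℝ)
    (ρ0 : S → ℝ) : Set (EuclideanSpace ℝ (S × A)) :=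
  {μ | (∀ p, 0 ≤ μ p) ∧ (∑ p : S × A, μ p = 1) ∧
    ∀ s, ∑ a, μ (s, a) = (1 - γ) * ρ0 s + γ * ∑ s' : S, ∑ a' : A, P s' a' s * μ (s', a')}


section Occupancy

variable {S A : Type*} [Fintype S] [Fintype A] {γ : ℝ} {P : S → A → S → ℝ}
  {π : S → A → ℝ} {ρ0 : S → ℝ}

lemma summable_pow_mul_of_nonneg_of_le_one (hγ0 : 0 ≤ γ) (hγ1 : γ < 1) {f : ℕ → ℝ}
    (hf0 : ∀ t, 0 ≤ f t) (hf1 : ∀ t, f t ≤ 1) : Summable fun t => γ ^ t * f t :=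
  (summable_geometric_of_lt_one hγ0 hγ1).of_nonneg_of_le
    (fun t => mul_nonneg (pow_nonneg hγ0 t) (hf0 t))
    (fun t => mul_le_of_le_one_right (pow_nonneg hγ0 t) (hf1 t))

lemma sum_saDist_zero (hπ : IsPolicy π) (s : S) :
    ∑ a, saDist P π ρ0 0 s a = ρ0 s := by
  simp only [saDist, ← Finset.mul_sum, (hπ s).2, mul_one]

lemma sum_saDist_succ (hπ : IsPolicy π) (t : ℕ) (s : S) :
    ∑ a, saDist P π ρ0 (t + 1) s a = ∑ s', ∑ a', P s' a' s * saDist P π ρ0 t s' a' := by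
  simp only [saDist, ← Finset.sum_mul, (hπ s).2, one_mul]

lemma saDist_eq_mul_sum (hπ : IsPolicy π) (t : ℕ) (s : S) (a : A) :
    saDist P π ρ0 t s a = π s a * ∑ a', saDist P π ρ0 t s a' := by
  cases t with
  | zero => rw [sum_saDist_zero hπ, saDist, mul_comm]
  | succ t => rw [sum_saDist_succ hπ, saDist]

lemma saDist_nonneg (hP : IsKernel P) (hπ : IsPolicy π) (hρ0 : IsDist ρ0) (t : ℕ) (s : S)
    (a : A) : 0 ≤ saDist P π ρ0 t s a := by
  induction t generalizing s a with
  | zero => exact mul_nonneg (hρ0.1 s) ((hπ s).1 a)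
  | succ t ih =>
    exact mul_nonneg ((hπ s).1 a) (Finset.sum_nonneg fun s' _ =>
      Finset.sum_nonneg fun a' _ => mul_nonneg ((hP s' a').1 s) (ih s' a'))

lemma sum_sum_saDist (hP : IsKernel P) (hπ : IsPolicy π) (hρ0 : IsDist ρ0) (t : ℕ) :
    ∑ s, ∑ a, saDist P π ρ0 t s a = 1 := by
  induction t with
  | zero => simp only [sum_saDist_zero hπ, hρ0.2]
  | succ t ih =>
    simp only [sum_saDist_succ hπ]
    rw [Finset.sum_comm, ← ih]
    refine Finset.sum_congr rfl fun s' _ => ?_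
    rw [Finset.sum_comm]
    simp only [← Finset.sum_mul, (hP s' _).2, one_mul]

lemma sum_saDist_le_one (hP : IsKernel P) (hπ : IsPolicy π) (hρ0 : IsDist ρ0) (t : ℕ)
    (s : S) : ∑ a, saDist P π ρ0 t s a ≤ 1 :=
  sum_sum_saDist hP hπ hρ0 t ▸ Finset.single_le_sum (f := fun s => ∑ a, saDist P π ρ0 t s a)
    (fun s' _ => Finset.sum_nonneg fun a _ => saDist_nonneg hP hπ hρ0 t s' a)
    (Finset.mem_univ s)

lemma summable_saDist (hγ0 : 0 ≤ γ) (hγ1 : γ < 1) (hP : IsKernel P) (hπ : IsPolicy π)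
    (hρ0 : IsDist ρ0) (s : S) (a : A) : Summable fun t => γ ^ t * saDist P π ρ0 t s a :=
  summable_pow_mul_of_nonneg_of_le_one hγ0 hγ1 (fun t => saDist_nonneg hP hπ hρ0 t s a)
    fun t => (Finset.single_le_sum (fun a' _ => saDist_nonneg hP hπ hρ0 t s a')
      (Finset.mem_univ a)).trans (sum_saDist_le_one hP hπ hρ0 t s)

lemma summable_sum_saDist (hγ0 : 0 ≤ γ) (hγ1 : γ < 1) (hP : IsKernel P) (hπ : IsPolicy π)
    (hρ0 : IsDist ρ0) (s : S) : Summable fun t => γ ^ t * ∑ a, saDist P π ρ0 t s a :=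
  summable_pow_mul_of_nonneg_of_le_one hγ0 hγ1
    (fun t => Finset.sum_nonneg fun a _ => saDist_nonneg hP hπ hρ0 t s a)
    (fun t => sum_saDist_le_one hP hπ hρ0 t s)

lemma occ_nonneg (hγ0 : 0 ≤ γ) (hγ1 : γ ≤ 1) (hP : IsKernel P) (hπ : IsPolicy π)
    (hρ0 : IsDist ρ0) (s : S) (a : A) : 0 ≤ occ γ P π ρ0 s a :=
  mul_nonneg (sub_nonneg.2 hγ1) (tsum_nonneg fun t =>
    mul_nonneg (pow_nonneg hγ0 t) (saDist_nonneg hP hπ hρ0 t s a))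

lemma occ_eq_mul_tsum (hπ : IsPolicy π) (s : S) (a : A) :
    occ γ P π ρ0 s a = π s a * ((1 - γ) * ∑' t, γ ^ t * ∑ a', saDist P π ρ0 t s a') := by
  simp only [occ, saDist_eq_mul_sum (a := a) hπ, mul_left_comm _ (π s a), tsum_mul_left]

lemma sum_occ (hπ : IsPolicy π) (s : S) :
    ∑ a, occ γ P π ρ0 s a = (1 - γ) * ∑' t, γ ^ t * ∑ a, saDist P π ρ0 t s a := by
  simp only [occ_eq_mul_tsum hπ, ← Finset.sum_mul, (hπ s).2, one_mul]

lemma occ_eq_mul_sum (hπ : IsPolicy π) (s : S) (a : A) :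
    occ γ P π ρ0 s a = π s a * ∑ a', occ γ P π ρ0 s a' := by
  rw [sum_occ hπ, occ_eq_mul_tsum hπ]

lemma sum_sum_occ (hγ0 : 0 ≤ γ) (hγ1 : γ < 1) (hP : IsKernel P) (hπ : IsPolicy π)
    (hρ0 : IsDist ρ0) : ∑ s, ∑ a, occ γ P π ρ0 s a = 1 := by
  simp only [sum_occ hπ, ← Finset.mul_sum]
  rw [← Summable.tsum_finsetSum fun s _ => summable_sum_saDist hγ0 hγ1 hP hπ hρ0 s]
  simp only [← Finset.mul_sum, sum_sum_saDist hP hπ hρ0, mul_one,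
    tsum_geometric_of_lt_one hγ0 hγ1]
  exact mul_inv_cancel₀ (sub_ne_zero.2 hγ1.ne')

lemma occ_flow (hγ0 : 0 ≤ γ) (hγ1 : γ < 1) (hP : IsKernel P) (hπ : IsPolicy π)
    (hρ0 : IsDist ρ0) (s : S) :
    ∑ a, occ γ P π ρ0 s a =
      (1 - γ) * ρ0 s + γ * ∑ s', ∑ a', P s' a' s * occ γ P π ρ0 s' a' := by
  have hsumm : ∀ s' a', Summable fun t => P s' a' s * (γ ^ t * saDist P π ρ0 t s' a') :=
    fun s' a' => (summable_saDist hγ0 hγ1 hP hπ hρ0 s' a').mul_left _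
  have hshift : ∑' t, γ ^ (t + 1) * ∑ a, saDist P π ρ0 (t + 1) s a =
      γ * ∑ s', ∑ a', P s' a' s * ∑' t, γ ^ t * saDist P π ρ0 t s' a' := by
    have hterm : ∀ t, γ ^ (t + 1) * ∑ a, saDist P π ρ0 (t + 1) s a =
        ∑ s', ∑ a', γ * (P s' a' s * (γ ^ t * saDist P π ρ0 t s' a')) := fun t => by
      simp only [sum_saDist_succ hπ, Finset.mul_sum]
      exact Finset.sum_congr rfl fun s' _ => Finset.sum_congr rfl fun a' _ => by ring
    rw [tsum_congr hterm,
      Summable.tsum_finsetSum fun s' _ => summable_sum fun a' _ => (hsumm s' a').mul_left γ]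
    simp only [Finset.mul_sum]
    refine Finset.sum_congr rfl fun s' _ => ?_
    rw [Summable.tsum_finsetSum fun a' _ => (hsumm s' a').mul_left γ]
    simp only [tsum_mul_left]
  rw [sum_occ hπ, (summable_sum_saDist hγ0 hγ1 hP hπ hρ0 s).tsum_eq_zero_add, pow_zero,
    one_mul, sum_saDist_zero hπ, hshift]
  simp only [occ, mul_left_comm _ (1 - γ), ← Finset.mul_sum]
  ring

end Occupancy

lemma exists_isDist_mul_sum {X : Type*} [Fintype X] [Nonempty X] {p : X → ℝ}
    (hp : ∀ x, 0 ≤ p x) : ∃ q : X → ℝ, IsDist q ∧ ∀ x, p x = q x * ∑ y, p y := by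
  by_cases h : ∑ y, p y = 0
  · refine ⟨fun _ => (Fintype.card X : ℝ)⁻¹, ⟨fun _ => by positivity, ?_⟩, fun x => ?_⟩
    · simp
    · rw [h, mul_zero]
      exact (Finset.sum_eq_zero_iff_of_nonneg fun y _ => hp y).1 h x (Finset.mem_univ x)
  · refine ⟨fun x => p x / ∑ y, p y, ⟨fun x => div_nonneg (hp x) (Finset.sum_nonneg
      fun y _ => hp y), by rw [← Finset.sum_div, div_self h]⟩, fun x => ?_⟩
    rw [div_mul_cancel₀ _ h]

lemma eq_zero_of_eq_mul_sum_transition {S : Type*} [Fintype S] {γ : ℝ} (hγ0 : 0 ≤ γ)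
    (hγ1 : γ < 1) {K : S → S → ℝ} (hK : ∀ s, IsDist (K s)) {d : S → ℝ}
    (hd : ∀ s, d s = γ * ∑ s', K s' s * d s') : d = 0 := by
  have hcontract : ∑ s, |d s| ≤ γ * ∑ s, |d s| :=
    calc ∑ s, |d s| = ∑ s, γ * |∑ s', K s' s * d s'| :=
          Finset.sum_congr rfl fun s _ => by rw [hd s, abs_mul, abs_of_nonneg hγ0]
      _ ≤ ∑ s, γ * ∑ s', K s' s * |d s'| := by
          gcongr with s
          refine (Finset.abs_sum_le_sum_abs _ _).trans_eq (Finset.sum_congr rfl fun s' _ => ?_)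
          rw [abs_mul, abs_of_nonneg ((hK s').1 s)]
      _ = γ * ∑ s', |d s'| := by
          rw [← Finset.mul_sum, Finset.sum_comm]
          simp only [← Finset.sum_mul, (hK _).2, one_mul]
  have hnonneg : 0 ≤ ∑ s, |d s| := Finset.sum_nonneg fun s _ => abs_nonneg _
  have hzero : ∑ s, |d s| = 0 := by nlinarith
  funext s
  exact abs_eq_zero.1 ((Finset.sum_eq_zero_iff_of_nonneg fun s _ => abs_nonneg _).1 hzero s
    (Finset.mem_univ s))

section Realization

variable {S A : Type*} [Fintype S] [Fintype A] {γ : ℝ} {P : S → A → S → ℝ}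
  {π : S → A → ℝ} {ρ0 : S → ℝ}

lemma IsKernel.isDist_sum_mul_policy (hP : IsKernel P) (hπ : IsPolicy π) (s : S) :
    IsDist fun s' => ∑ a, P s a s' * π s a := by
  refine ⟨fun s' => Finset.sum_nonneg fun a _ => mul_nonneg ((hP s a).1 s') ((hπ s).1 a), ?_⟩
  rw [Finset.sum_comm]
  simp only [← Finset.sum_mul, (hP s _).2, one_mul, (hπ s).2]

lemma eq_of_flow_of_eq_mul_sum (hγ0 : 0 ≤ γ) (hγ1 : γ < 1) (hP : IsKernel P)
    (hπ : IsPolicy π) {μ₁ μ₂ : S → A → ℝ}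
    (hflow₁ : ∀ s, ∑ a, μ₁ s a = (1 - γ) * ρ0 s + γ * ∑ s', ∑ a', P s' a' s * μ₁ s' a')
    (hflow₂ : ∀ s, ∑ a, μ₂ s a = (1 - γ) * ρ0 s + γ * ∑ s', ∑ a', P s' a' s * μ₂ s' a')
    (hμ₁ : ∀ s a, μ₁ s a = π s a * ∑ a', μ₁ s a')
    (hμ₂ : ∀ s a, μ₂ s a = π s a * ∑ a', μ₂ s a') : μ₁ = μ₂ := by
  have hmarginal : ∀ μ : S → A → ℝ, (∀ s a, μ s a = π s a * ∑ a', μ s a') → ∀ s,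
      ∑ s', ∑ a', P s' a' s * μ s' a' = ∑ s', (∑ a', P s' a' s * π s' a') * ∑ a, μ s' a :=
    fun μ hμ s => Finset.sum_congr rfl fun s' _ => by
      rw [Finset.sum_mul]
      exact Finset.sum_congr rfl fun a' _ => by rw [hμ s' a']; ring
  have hdiff : (fun s => ∑ a, μ₁ s a - ∑ a, μ₂ s a) = 0 := by
    refine eq_zero_of_eq_mul_sum_transition hγ0 hγ1 (hP.isDist_sum_mul_policy hπ) fun s => ?_
    rw [hflow₁, hflow₂, hmarginal μ₁ hμ₁, hmarginal μ₂ hμ₂]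
    simp only [mul_sub, Finset.sum_sub_distrib]
    ring
  funext s a
  rw [hμ₁, hμ₂, sub_eq_zero.1 (congr_fun hdiff s)]

lemma exists_isPolicy_occ_eq [Nonempty A] (hγ0 : 0 ≤ γ) (hγ1 : γ < 1) (hP : IsKernel P)
    (hρ0 : IsDist ρ0) {μ : S → A → ℝ} (hμ : ∀ s a, 0 ≤ μ s a)
    (hflow : ∀ s, ∑ a, μ s a = (1 - γ) * ρ0 s + γ * ∑ s', ∑ a', P s' a' s * μ s' a') :
    ∃ π : S → A → ℝ, IsPolicy π ∧ occ γ P π ρ0 = μ := by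
  choose π hπ hμπ using fun s => exists_isDist_mul_sum (hμ s)
  exact ⟨π, hπ, eq_of_flow_of_eq_mul_sum hγ0 hγ1 hP hπ (occ_flow hγ0 hγ1 hP hπ hρ0) hflow
    (occ_eq_mul_sum hπ) hμπ⟩

lemma occE_mem_MflowE (hγ0 : 0 ≤ γ) (hγ1 : γ < 1) (hP : IsKernel P) (hπ : IsPolicy π)
    (hρ0 : IsDist ρ0) : occE γ P π ρ0 ∈ MflowE γ P ρ0 :=
  ⟨fun p => occ_nonneg hγ0 hγ1.le hP hπ hρ0 p.1 p.2,
    (Fintype.sum_prod_type _).trans (sum_sum_occ hγ0 hγ1 hP hπ hρ0),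
    occ_flow hγ0 hγ1 hP hπ hρ0⟩

lemma MflowE_eq_image_occE [Nonempty A] (hγ0 : 0 ≤ γ) (hγ1 : γ < 1) (hP : IsKernel P)
    (hρ0 : IsDist ρ0) : MflowE γ P ρ0 = (fun π => occE γ P π ρ0) '' {π | IsPolicy π} := by
  ext μ
  constructor
  · rintro ⟨hμ, -, hflow⟩
    obtain ⟨π, hπ, hocc⟩ := exists_isPolicy_occ_eq hγ0 hγ1 hP hρ0 (μ := fun s a => μ (s, a))
      (fun s a => hμ (s, a)) hflow
    exact ⟨π, hπ, by ext p; exact congr_fun₂ hocc p.1 p.2⟩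
  · rintro ⟨π, hπ, rfl⟩
    exact occE_mem_MflowE hγ0 hγ1 hP hπ hρ0

end Realization

theorem stmt16_general {S A : Type*} [Fintype S] [Fintype A] [Nonempty A]
    (γ : ℝ) (hγ : γ ∈ Set.Ioo (0 : ℝ) 1)
    (P : S → A → S → ℝ) (hP : IsKernel P)
    (ρ0 : S → ℝ) (hρ0 : IsDist ρ0)
    (R : EuclideanSpace ℝ (S × A) → EuclideanSpace ℝ (S × A))
    (π : S → A → ℝ)
    (ε : ℝ) :
    (∀ μ' ∈ MflowE γ P ρ0, ⟪R (occE γ P π ρ0), μ' - occE γ P π ρ0⟫ ≤ ε) ↔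
    (∀ π' : S → A → ℝ, IsPolicy π' →
      ⟪occE γ P π' ρ0, R (occE γ P π ρ0)⟫ - ⟪occE γ P π ρ0, R (occE γ P π ρ0)⟫ ≤ ε) := by
  have hinner : ∀ μ', ⟪R (occE γ P π ρ0), μ' - occE γ P π ρ0⟫ =
      ⟪μ', R (occE γ P π ρ0)⟫ - ⟪occE γ P π ρ0, R (occE γ P π ρ0)⟫ := fun μ' => by
    rw [inner_sub_right, real_inner_comm _ μ', real_inner_comm _ (occE γ P π ρ0)]
  rw [MflowE_eq_image_occE hγ.1.le hγ.2 hP hρ0, Set.forall_mem_image]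
  simp only [hinner, Set.mem_ofPred_eq]

/-- ε-version of the equivalence between first-order optimality for CURL and
exploitability in the associated MFG with reward `R(·,μ) = ∇F(μ)`:
`⟨∇F(μ_π), μ' - μ_π⟩ ≤ ε` for all `μ' ∈ M` iff the exploitability of `π` is at
most `ε`, i.e. `J(π', μ_π) - J(π, μ_π) ≤ ε` for every policy `π'`. -/
theorem stmt16 {S A : Type*} [Fintype S] [Fintype A] [Nonempty S] [Nonempty A]
    (γ : ℝ) (hγ : γ ∈ Set.Ioo (0 : ℝ) 1)
    (P : S → A → S → ℝ) (hP : IsKernel P)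
    (ρ0 : S → ℝ) (hρ0 : IsDist ρ0)
    (F : EuclideanSpace ℝ (S × A) → ℝ)
    (R : EuclideanSpace ℝ (S × A) → EuclideanSpace ℝ (S × A))
    (hF : ConcaveOn ℝ (MflowE γ P ρ0) F)
    (hgrad : ∀ μ ∈ MflowE γ P ρ0, HasGradientAt F (R μ) μ)
    (π : S → A → ℝ) (hπ : IsPolicy π)
    (ε : ℝ) (hε : 0 < ε) :
    (∀ μ' ∈ MflowE γ P ρ0, ⟪R (occE γ P π ρ0), μ' - occE γ P π ρ0⟫ ≤ ε) ↔
    (∀ π' : S → A → ℝ, IsPolicy π' →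
      ⟪occE γ P π' ρ0, R (occE γ P π ρ0)⟫ - ⟪occE γ P π ρ0, R (occE γ P π ρ0)⟫ ≤ ε) :=
  stmt16_general γ hγ P hP ρ0 hρ0 R π ε
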